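/- arXiv:1809.08446 — 2 statements merged into one kernel-verified Lean document; each statement's English description precedes it below -/
import Mathlib

section
/- For a nonnegative integer-valued flow f with conservation at all internal vertices in a finite directed acyclic graph, if the net outflow at s equals k > 0, then f can be decomposed into k s-t paths: there exist s-t paths p_1, ..., p_k such that f(e) equals the number of indices i and positions at which e occurs on p_i, for every edge e. -/
/-- A walk in a directed graph given by edge relation `E`. -/
def IsWalk {V : Type*} (E : V → V → Prop) (l : List V) : Prop :=
  l ≠ [] ∧ l.Chain' E

/-- An s-t walk. -/
def IsSTWalk {V : Type*} (E : V → V → Prop) (s t : V) (l : List V) : Prop :=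
  IsWalk E l ∧ l.head? = some s ∧ l.getLast? = some t

/-- The list of (directed) edges traversed by a walk, with multiplicity. -/
def walkEdges {V : Type*} (l : List V) : List (V × V) :=
  l.zip l.tail

/-!
Since the graph is finite and acyclic, its edge relation is well-founded in both directions.
From `s`, follow edges of positive flow: a vertex other than `s` and `t` entered along such an
edge has positive outflow by conservation, and no edge enters `s`, so the walk ends at `t`.
Acyclicity makes it a path, which uses each edge at most once, so subtracting its indicator
from `f` leaves a flow of value `k - 1`. A flow of value `0` vanishes, by well-founded
induction along the edges; induction on `k` concludes.
-/

open List Relation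

theorem List.sum_count_mk_left {α β : Type*} [Fintype α] [DecidableEq α] [DecidableEq β]
    (es : List (α × β)) (b : β) : ∑ a, es.count (a, b) = (es.map Prod.snd).count b := by
  induction es with
  | nil => simp
  | cons e es ih =>
    obtain ⟨a', b'⟩ := e
    by_cases hb : b' = b <;> simp [count_cons, Finset.sum_add_distrib, ih, hb]

theorem List.sum_count_mk_right {α β : Type*} [Fintype β] [DecidableEq α] [DecidableEq β]
    (es : List (α × β)) (a : α) : ∑ b, es.count (a, b) = (es.map Prod.fst).count a := by
  induction es with
  | nil => simp
  | cons e es ih =>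
    obtain ⟨a', b'⟩ := e
    by_cases ha : a' = a <;> simp [count_cons, Finset.sum_add_distrib, ih, ha]

theorem List.count_tail_of_head?_eq_some {α : Type*} [DecidableEq α] {l : List α}
    {a b : α} (h : l.head? = some a) (hb : b ≠ a) : l.tail.count b = l.count b := by
  obtain ⟨r, rfl⟩ := head?_eq_some_iff.mp h
  simp [Ne.symm hb]

theorem List.count_dropLast_of_getLast?_eq_some {α : Type*} [DecidableEq α] {l : List α}
    {a b : α} (h : l.getLast? = some a) (hb : b ≠ a) : l.dropLast.count b = l.count b := by
  obtain ⟨r, rfl⟩ := getLast?_eq_some_iff.mp h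
  simp [Ne.symm hb]

theorem wellFounded_of_acyclic {V : Type*} [Finite V] {R : V → V → Prop}
    (hacyc : ∀ v, ¬ TransGen R v v) : WellFounded R :=
  haveI : Std.Irrefl (TransGen R) := ⟨hacyc⟩
  Subrelation.wf TransGen.single (Finite.wellFounded_of_trans_of_irrefl (TransGen R))

theorem wellFounded_swap_of_acyclic {V : Type*} [Finite V] {R : V → V → Prop}
    (hacyc : ∀ v, ¬ TransGen R v v) : WellFounded (Function.swap R) :=
  wellFounded_of_acyclic fun v h => hacyc v (transGen_swap.mp h)

section Walks

variable {V : Type*} {R R' : V → V → Prop} {s t : V} {l : List V}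

theorem isSTWalk_iff :
    IsSTWalk R s t l ↔ l.IsChain R ∧ l.head? = some s ∧ l.getLast? = some t := by
  refine ⟨fun ⟨⟨_, hl⟩, hs, ht⟩ => ⟨hl, hs, ht⟩, fun ⟨hl, hs, ht⟩ => ⟨⟨?_, hl⟩, hs, ht⟩⟩
  rintro rfl
  simp at hs

theorem IsSTWalk.mono (hR : ∀ ⦃a b⦄, R a b → R' a b) (hl : IsSTWalk R s t l) :
    IsSTWalk R' s t l := by
  rw [isSTWalk_iff] at hl ⊢
  exact ⟨hl.1.imp hR, hl.2⟩

theorem isSTWalk_singleton (t : V) : IsSTWalk R t t [t] :=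
  isSTWalk_iff.mpr ⟨isChain_singleton t, rfl, rfl⟩

theorem IsSTWalk.cons {u : V} (hu : R u s) (hl : IsSTWalk R s t l) : IsSTWalk R u t (u :: l) := by
  obtain ⟨hc, hs, ht⟩ := isSTWalk_iff.mp hl
  obtain ⟨r, rfl⟩ := head?_eq_some_iff.mp hs
  exact isSTWalk_iff.mpr ⟨isChain_cons_cons.mpr ⟨hu, hc⟩, rfl, by rwa [getLast?_cons_cons]⟩

theorem List.IsChain.nodup_of_acyclic (hacyc : ∀ v, ¬ TransGen R v v) (hl : l.IsChain R) :
    l.Nodup := by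
  refine (hl.imp fun _ _ => TransGen.single).pairwise.imp ?_
  rintro a _ h rfl
  exact hacyc a h

theorem walkEdges_eq_zip_dropLast (l : List V) : walkEdges l = l.dropLast.zip l.tail := by
  rw [walkEdges, zip_eq_zip_take_min, zip_eq_zip_take_min (l₁ := l.dropLast), dropLast_eq_take]
  simp [take_take]

theorem map_fst_walkEdges (l : List V) : (walkEdges l).map Prod.fst = l.dropLast := by
  rw [walkEdges_eq_zip_dropLast, map_fst_zip]
  simp

theorem map_snd_walkEdges (l : List V) : (walkEdges l).map Prod.snd = l.tail := by
  rw [walkEdges_eq_zip_dropLast, map_snd_zip]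
  simp

theorem List.IsChain.rel_of_mem_walkEdges (hl : l.IsChain R) {u v : V}
    (he : (u, v) ∈ walkEdges l) : R u v := by
  rw [walkEdges_eq_zip_dropLast] at he
  exact forall₂_zip (isChain_iff_forall₂.mp hl) he

theorem List.Nodup.walkEdges (hl : l.Nodup) : (walkEdges l).Nodup :=
  .of_map Prod.fst <| map_fst_walkEdges l ▸ hl.sublist (dropLast_sublist l)

end Walks

section WalkFlow

variable {V : Type*} [DecidableEq V] {f : V → V → ℕ} {l : List V}

def walkFlow (l : List V) (u v : V) : ℕ := (walkEdges l).count (u, v)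

theorem walkFlow_le (hnd : l.Nodup) (hl : l.IsChain fun a b => 0 < f a b) : walkFlow l ≤ f := by
  intro u v
  by_cases he : (u, v) ∈ walkEdges l
  · exact (nodup_iff_count_le_one.mp hnd.walkEdges (u, v)).trans (hl.rel_of_mem_walkEdges he)
  · simp [walkFlow, count_eq_zero.mpr he]

end WalkFlow

section Flows

variable {V : Type*} [Fintype V] {E : V → V → Prop} {s t : V} {f g : V → V → ℕ}

structure IsFlow (E : V → V → Prop) (s t : V) (f : V → V → ℕ) : Prop where
  supp : ∀ u v, ¬ E u v → f u v = 0
  conserv : ∀ v, v ≠ s → v ≠ t → ∑ u, f u v = ∑ u, f v u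

namespace IsFlow

theorem rel_of_pos (hf : IsFlow E s t f) {u v : V} (h : 0 < f u v) : E u v :=
  of_not_not fun huv => h.ne' (hf.supp u v huv)

theorem of_add_left (hgf : IsFlow E s t (g + f)) (hg : IsFlow E s t g) : IsFlow E s t f where
  supp u v huv := (Nat.add_eq_zero_iff.mp (hgf.supp u v huv)).2
  conserv v hvs hvt := by
    have h := hgf.conserv v hvs hvt
    simp only [Pi.add_apply, Finset.sum_add_distrib, hg.conserv v hvs hvt] at h
    exact Nat.add_left_cancel h

theorem eq_zero (hf : IsFlow E s t f) (hwf : WellFounded E) (ht : ∀ u, ¬ E t u)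
    (h0 : ∑ v, f s v = 0) : f = 0 := by
  have hout : ∀ v, ∑ u, f v u = 0 := by
    intro v
    induction v using hwf.induction with
    | _ v ih =>
      by_cases hvs : v = s
      · exact hvs ▸ h0
      by_cases hvt : v = t
      · subst hvt
        exact Finset.sum_eq_zero fun u _ => hf.supp _ _ (ht u)
      rw [← hf.conserv v hvs hvt]
      refine Finset.sum_eq_zero fun u _ => ?_
      by_cases huv : E u v
      · exact Finset.sum_eq_zero_iff.mp (ih u huv) v (Finset.mem_univ v)
      · exact hf.supp u v huv
  funext u v
  exact Finset.sum_eq_zero_iff.mp (hout u) v (Finset.mem_univ v)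

theorem exists_isSTWalk_pos (hf : IsFlow E s t f) (hwf : WellFounded (Function.swap E))
    (hs : ∀ u, ¬ E u s) (v : V) (hv : 0 < ∑ u, f v u) :
    ∃ l, IsSTWalk (fun a b => 0 < f a b) v t l := by
  induction v using hwf.induction with
  | _ v ih =>
    obtain ⟨w, -, hvw⟩ := Finset.sum_pos_iff.mp hv
    by_cases hwt : w = t
    · exact ⟨[v, w], hwt ▸ (isSTWalk_singleton w).cons hvw⟩
    have hE : E v w := hf.rel_of_pos hvw
    have hws : w ≠ s := by
      rintro rfl
      exact hs v hE
    have hw : 0 < ∑ u, f w u := by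
      rw [← hf.conserv w hws hwt]
      exact hvw.trans_le
        (Finset.single_le_sum (fun u _ => Nat.zero_le (f u w)) (Finset.mem_univ v))
    obtain ⟨l, hl⟩ := ih w hE hw
    exact ⟨v :: l, hl.cons hvw⟩

end IsFlow

variable [DecidableEq V] {l : List V}

theorem sum_walkFlow_in (l : List V) (v : V) : ∑ u, walkFlow l u v = l.tail.count v := by
  unfold walkFlow
  rw [sum_count_mk_left, map_snd_walkEdges]

theorem sum_walkFlow_out (l : List V) (v : V) : ∑ u, walkFlow l v u = l.dropLast.count v := by
  unfold walkFlow
  rw [sum_count_mk_right, map_fst_walkEdges]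

theorem IsSTWalk.isFlow_walkFlow (hl : IsSTWalk E s t l) : IsFlow E s t (walkFlow l) where
  supp u v huv :=
    count_eq_zero.mpr fun he => huv ((isSTWalk_iff.mp hl).1.rel_of_mem_walkEdges he)
  conserv v hvs hvt := by
    obtain ⟨-, hs, ht⟩ := isSTWalk_iff.mp hl
    rw [sum_walkFlow_in, sum_walkFlow_out, count_tail_of_head?_eq_some hs hvs,
      count_dropLast_of_getLast?_eq_some ht hvt]

theorem IsSTWalk.sum_walkFlow_source (hl : IsSTWalk E s t l) (hst : s ≠ t)
    (hs : ∀ u, ¬ E u s) : ∑ v, walkFlow l s v = 1 := by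
  obtain ⟨hc, hhead, hlast⟩ := isSTWalk_iff.mp hl
  have hs_tail : s ∉ l.tail := by
    rw [← map_snd_walkEdges]
    rintro h
    obtain ⟨⟨u, _⟩, he, rfl⟩ := mem_map.mp h
    exact hs u (hc.rel_of_mem_walkEdges he)
  rw [sum_walkFlow_out, count_dropLast_of_getLast?_eq_some hlast hst]
  obtain ⟨r, rfl⟩ := head?_eq_some_iff.mp hhead
  simpa [count_cons, count_eq_zero] using hs_tail

namespace IsFlow

theorem exists_isSTWalk_add (hf : IsFlow E s t f) (hacyc : ∀ v, ¬ TransGen E v v)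
    (hs : ∀ u, ¬ E u s) (ht : ∀ u, ¬ E t u) (hpos : 0 < ∑ v, f s v) :
    ∃ l g, IsSTWalk E s t l ∧ IsFlow E s t g ∧ f = walkFlow l + g ∧
      ∑ v, f s v = ∑ v, g s v + 1 := by
  have hst : s ≠ t := by
    rintro rfl
    simp [hf.supp _ _ (ht _)] at hpos
  obtain ⟨l, hl⟩ := hf.exists_isSTWalk_pos (wellFounded_swap_of_acyclic hacyc) hs s hpos
  have hlE : IsSTWalk E s t l := hl.mono fun _ _ => hf.rel_of_pos
  have hle : walkFlow l ≤ f :=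
    walkFlow_le ((isSTWalk_iff.mp hlE).1.nodup_of_acyclic hacyc) (isSTWalk_iff.mp hl).1
  have hsplit : f = walkFlow l + (f - walkFlow l) := (add_tsub_cancel_of_le hle).symm
  refine ⟨l, f - walkFlow l, hlE, (hsplit ▸ hf).of_add_left hlE.isFlow_walkFlow, hsplit, ?_⟩
  conv_lhs => rw [hsplit]
  simp only [Pi.add_apply, Finset.sum_add_distrib, hlE.sum_walkFlow_source hst hs]
  exact add_comm _ _

theorem exists_decomposition (hacyc : ∀ v, ¬ TransGen E v v) (hs : ∀ u, ¬ E u s)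
    (ht : ∀ u, ¬ E t u) : ∀ (k : ℕ) {f : V → V → ℕ}, IsFlow E s t f → ∑ v, f s v = k →
      ∃ p : Fin k → List V, (∀ i, IsSTWalk E s t (p i)) ∧ f = ∑ i, walkFlow (p i)
  | 0, f, hf, hval =>
    ⟨Fin.elim0, Fin.rec0, by simp [hf.eq_zero (wellFounded_of_acyclic hacyc) ht hval]⟩
  | k + 1, f, hf, hval => by
    obtain ⟨l, g, hl, hg, rfl, hgval⟩ := hf.exists_isSTWalk_add hacyc hs ht (by omega)
    obtain ⟨p, hp, rfl⟩ := exists_decomposition hacyc hs ht k hg (by omega)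
    refine ⟨Fin.cons l p, Fin.cases hl hp, ?_⟩
    rw [Fin.sum_univ_succ]
    simp only [Fin.cons_zero, Fin.cons_succ]

end IsFlow

end Flows

theorem flow_decomposition_general {V : Type*} [Fintype V] [DecidableEq V]
    (E : V → V → Prop) (s t : V)
    (hacyc : ∀ v, ¬ Relation.TransGen E v v)
    (hs : ∀ u, ¬ E u s) (ht : ∀ u, ¬ E t u)
    (f : V → V → ℕ)
    (hsupp : ∀ u v, ¬ E u v → f u v = 0)
    (hcons : ∀ v, v ≠ s → v ≠ t → (∑ u, f u v) = ∑ u, f v u)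
    (k : ℕ)
    (hval : (∑ v, f s v) = k) :
    ∃ p : Fin k → List V,
      (∀ i, IsSTWalk E s t (p i)) ∧
      (∀ u v, f u v = ∑ i, (walkEdges (p i)).count (u, v)) := by
  obtain ⟨p, hp, hf⟩ := IsFlow.exists_decomposition hacyc hs ht k ⟨hsupp, hcons⟩ hval
  refine ⟨p, hp, fun u v => ?_⟩
  simp only [hf, Finset.sum_apply, walkFlow]

/-- In a finite DAG with source `s` (in-degree 0) and sink `t`
(out-degree 0), a nonnegative integer flow `f` supported on the edges, with
conservation at every internal vertex and value `k > 0` at `s`, decomposes into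
`k` s-t paths: `f e` equals the total number of occurrences of `e` on the paths,
for every edge `e`. -/
theorem flow_decomposition {V : Type*} [Fintype V] [DecidableEq V]
    (E : V → V → Prop) (s t : V)
    (hacyc : ∀ v, ¬ Relation.TransGen E v v)
    (hs : ∀ u, ¬ E u s) (ht : ∀ u, ¬ E t u)
    (f : V → V → ℕ)
    (hsupp : ∀ u v, ¬ E u v → f u v = 0)
    (hcons : ∀ v, v ≠ s → v ≠ t → (∑ u, f u v) = ∑ u, f v u)
    (k : ℕ) (hk : 0 < k)
    (hval : (∑ v, f s v) = k) :
    ∃ p : Fin k → List V,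
      (∀ i, IsSTWalk E s t (p i)) ∧
      (∀ u v, f u v = ∑ i, (walkEdges (p i)).count (u, v)) :=
  flow_decomposition_general E s t hacyc hs ht f hsupp hcons k hval
end

section
/- In a finite directed acyclic graph, the maximum size of an antichain with respect to reachability (a set of vertices pairwise unreachable from one another) equals the minimum number of paths needed so that every vertex lies on at least one path, provided every vertex lies on some s-t path and we count s-t paths (Dilworth-type duality via reachability order). -/
/-!
Reachability is a partial order on the vertices of a DAG, and the theorem is Dilworth's theorem
for it. An antichain meets each path at most once, so no antichain is larger than a path cover.
Conversely, each chain of the reachability order lies between `s` and `t`, so it can be threaded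
onto one s-t path, and Dilworth's theorem gives `k` chains covering `V` next to an antichain of
size `k`.

Dilworth's theorem is proved by Galvin's induction. Remove a maximal element `a`, split the rest
into `k` chains, and let `xᵢ` be the highest point of chain `i` lying on a maximum antichain; the
`xᵢ` form an antichain, since a maximum antichain through `xⱼ` meets chain `i` below `xᵢ`. If `a` lies above no `xᵢ`, add `a` to it and `{a}` as a new chain.
Otherwise `xᵢ ≤ a`, and removing the chain `K` formed by `a` and the part of chain `i` below `xᵢ`
leaves a set without antichains of size `k`, so `k - 1` chains and `K` cover everything.
-/

open Finset Relation

theorem IsChain.exists_forall_rel_of_finset {α : Type*} {r : α → α → Prop} [IsPreorder α r]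
    {s : Finset α} (hs : IsChain r (s : Set α)) (hne : s.Nonempty) : ∃ m ∈ s, ∀ x ∈ s, r m x := by
  induction hne using Finset.Nonempty.cons_induction with
  | singleton a => exact ⟨a, mem_singleton_self a, by simpa using refl_of r a⟩
  | cons a s _ _ ih =>
    obtain ⟨m, hm, hmin⟩ := ih (hs.mono (by simp))
    rcases hs.total (x := a) (y := m) (by simp) (by simp [hm]) with ham | hma
    · exact ⟨a, by simp, by simpa using ⟨refl a, fun x hx => _root_.trans ham (hmin x hx)⟩⟩
    · exact ⟨m, by simp [hm], by simpa using ⟨hma, hmin⟩⟩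

section Dilworth

variable {α : Type*} [PartialOrder α]

def IsChainColoring (S : Finset α) (k : ℕ) (c : α → ℕ) : Prop :=
  (∀ x ∈ S, c x < k) ∧ ∀ x ∈ S, ∀ y ∈ S, c x = c y → x ≤ y ∨ y ≤ x

/-- Next to a chain colouring of `S` in `k` colours, these are exactly the maximum antichains. -/
def IsLargeAntichain (S : Finset α) (k : ℕ) (B : Finset α) : Prop :=
  B ⊆ S ∧ IsAntichain (· ≤ ·) (B : Set α) ∧ k ≤ #B

namespace IsChainColoring

variable {S : Finset α} {k : ℕ} {c : α → ℕ}

theorem isChain_filter (hc : IsChainColoring S k c) (i : ℕ) :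
    IsChain (· ≤ ·) (({x ∈ S | c x = i} : Finset α) : Set α) := by
  intro x hx y hy _
  rw [mem_coe, mem_filter] at hx hy
  exact hc.2 x hx.1 y hy.1 (hx.2.trans hy.2.symm)

theorem injOn {A : Finset α} (hc : IsChainColoring S k c) (hAS : A ⊆ S)
    (hA : IsAntichain (· ≤ ·) (A : Set α)) : Set.InjOn c A := fun x hx y hy hxy =>
  (hc.2 x (hAS hx) y (hAS hy) hxy).elim (hA.eq hx hy) (hA.eq' hx hy)

theorem exists_mem_color {B : Finset α} (hc : IsChainColoring S k c)
    (hB : IsLargeAntichain S k B) {i : ℕ} (hi : i < k) : ∃ y ∈ B, c y = i := by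
  obtain ⟨y, hy, rfl⟩ := surjOn_of_injOn_of_card_le (t := range k) c
    (fun x hx => mem_range.2 (hc.1 x (hB.1 hx))) (hc.injOn hB.1 hB.2.1) (by simpa using hB.2.2)
    (mem_range.2 hi)
  exact ⟨y, hy, rfl⟩

theorem extend [DecidableEq α] {K : Finset α} (hc : IsChainColoring (S \ K) k c)
    (hK : IsChain (· ≤ ·) (K : Set α)) :
    IsChainColoring S (k + 1) (fun x => if x ∈ K then k else c x) := by
  refine ⟨fun x hx => ?_, fun x hx y hy hxy => ?_⟩
  · dsimp only
    split_ifs with hxK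
    · exact k.lt_succ_self
    · exact (hc.1 x (mem_sdiff.2 ⟨hx, hxK⟩)).trans k.lt_succ_self
  · by_cases hxK : x ∈ K <;> by_cases hyK : y ∈ K <;> simp only [hxK, hyK, if_true, if_false] at hxy
    · exact hK.total hxK hyK
    · exact absurd hxy (hc.1 y (mem_sdiff.2 ⟨hy, hyK⟩)).ne'
    · exact absurd hxy (hc.1 x (mem_sdiff.2 ⟨hx, hxK⟩)).ne
    · exact hc.2 x (mem_sdiff.2 ⟨hx, hxK⟩) y (mem_sdiff.2 ⟨hy, hyK⟩) hxy

theorem exists_top (hc : IsChainColoring S k c) {A : Finset α} (hA : IsLargeAntichain S k A)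
    {i : ℕ} (hi : i < k) : ∃ m, c m = i ∧ (∃ B, IsLargeAntichain S k B ∧ m ∈ B) ∧
      ∀ B, IsLargeAntichain S k B → ∃ y ∈ B, c y = i ∧ y ≤ m := by
  classical
  set T := {y ∈ S | c y = i ∧ ∃ B, IsLargeAntichain S k B ∧ y ∈ B}
  have hTne : T.Nonempty := by
    obtain ⟨y, hy, hyi⟩ := hc.exists_mem_color hA hi
    exact ⟨y, mem_filter.2 ⟨hA.1 hy, hyi, A, hA, hy⟩⟩
  have hT : IsChain (· ≥ ·) (T : Set α) :=
    ((hc.isChain_filter i).mono fun y hy => by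
      simp only [T, mem_coe, mem_filter] at hy ⊢; exact ⟨hy.1, hy.2.1⟩).symm
  obtain ⟨m, hmT, hmax⟩ := hT.exists_forall_rel_of_finset hTne
  obtain ⟨-, hmi, hmB⟩ := mem_filter.1 hmT
  refine ⟨m, hmi, hmB, fun B hB => ?_⟩
  obtain ⟨y, hy, hyi⟩ := hc.exists_mem_color hB hi
  exact ⟨y, hy, hyi, hmax y (mem_filter.2 ⟨hB.1 hy, hyi, B, hB, hy⟩)⟩

theorem exists_tops [DecidableEq α] (hc : IsChainColoring S k c) {A : Finset α}
    (hA : IsLargeAntichain S k A) : ∃ x : Fin k → α, IsLargeAntichain S k (univ.image x) ∧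
      ∀ i : Fin k, ∀ B, IsLargeAntichain S k B → ∃ y ∈ B, c y = i ∧ y ≤ x i := by
  choose x hxi hxB hx using fun i : Fin k => hc.exists_top hA i.2
  have hinj : Function.Injective x := fun i j hij => Fin.ext ((hxi i).symm.trans (hij ▸ hxi j))
  refine ⟨x, ⟨?_, ?_, ?_⟩, hx⟩
  · simp only [image_subset_iff, mem_univ, forall_const]
    intro i
    obtain ⟨B, hB, hiB⟩ := hxB i
    exact hB.1 hiB
  · simp only [coe_image, coe_univ, Set.image_univ]
    rintro _ ⟨i, rfl⟩ _ ⟨j, rfl⟩ hne hle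
    obtain ⟨B, hB, hjB⟩ := hxB j
    obtain ⟨y, hyB, hyi, hyx⟩ := hx i B hB
    have hyj : y = x j := hB.2.1.eq hyB hjB (hyx.trans hle)
    exact hne (congrArg x (Fin.ext (hyi.symm.trans (hyj ▸ hxi j))))
  · rw [card_image_of_injective _ hinj, card_univ, Fintype.card_fin]

end IsChainColoring

variable {S : Finset α} {k : ℕ} {c : α → ℕ} {a : α} {x : Fin k → α}

theorem dilworth_step_of_forall_not_le [DecidableEq α] (hc : IsChainColoring (S.erase a) k c)
    (haS : Maximal (· ∈ S) a) (hA : IsLargeAntichain (S.erase a) k (univ.image x))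
    (hxa : ∀ i, ¬ x i ≤ a) :
    ∃ k c, IsChainColoring S k c ∧ ∃ A, IsLargeAntichain S k A := by
  have hxS : ∀ i, x i ∈ S.erase a := fun i => hA.1 (mem_image_of_mem x (mem_univ i))
  have hax : ∀ i, ¬ a ≤ x i := fun i h =>
    (mem_erase.1 (hxS i)).1 (haS.eq_of_ge (mem_of_mem_erase (hxS i)) h)
  have haA : a ∉ univ.image x := fun h => (mem_erase.1 (hA.1 h)).1 rfl
  have hc' : IsChainColoring (S \ {a}) k c := sdiff_singleton_eq_erase a S ▸ hc
  refine ⟨k + 1, _, hc'.extend (Set.Subsingleton.isChain (by simp)), insert a (univ.image x),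
    insert_subset haS.1 (hA.1.trans (erase_subset a S)), ?_, ?_⟩
  · rw [coe_insert]
    refine hA.2.1.insert (fun b hb _ => ?_) (fun b hb _ => ?_)
    · obtain ⟨i, -, rfl⟩ := mem_image.1 (mem_coe.1 hb)
      exact hxa i
    · obtain ⟨i, -, rfl⟩ := mem_image.1 (mem_coe.1 hb)
      exact hax i
  · rw [card_insert_of_notMem haA]
    exact Nat.succ_le_succ hA.2.2

theorem dilworth_step_of_le [DecidableEq α] (hc : IsChainColoring (S.erase a) k c)
    (haS : a ∈ S) (hA : IsLargeAntichain (S.erase a) k (univ.image x))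
    {i : Fin k} (hxa : x i ≤ a)
    (hx : ∀ B, IsLargeAntichain (S.erase a) k B → ∃ y ∈ B, c y = i ∧ y ≤ x i)
    (ih : ∀ T ⊂ S, ∃ k c, IsChainColoring T k c ∧ ∃ A, IsLargeAntichain T k A) :
    ∃ k c, IsChainColoring S k c ∧ ∃ A, IsLargeAntichain S k A := by
  classical
  set K := insert a {y ∈ S.erase a | c y = i ∧ y ≤ x i}
  have hK : IsChain (· ≤ ·) (K : Set α) := by
    rw [coe_insert]
    refine ((hc.isChain_filter i).mono fun y hy => ?_).insert fun b hb _ => ?_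
    · simp only [mem_coe, mem_filter] at hy ⊢
      exact ⟨hy.1, hy.2.1⟩
    · exact Or.inr ((mem_filter.1 hb).2.2.trans hxa)
  have haK : a ∈ K := mem_insert_self _ _
  have hSK : S \ K ⊆ S.erase a := fun y hy =>
    mem_erase.2 ⟨fun h => (mem_sdiff.1 hy).2 (h ▸ haK), (mem_sdiff.1 hy).1⟩
  obtain ⟨l, d, hd, B, hB⟩ := ih (S \ K) (sdiff_ssubset (insert_subset haS
    ((filter_subset _ _).trans (erase_subset a S))) ⟨a, haK⟩)
  have hlk : l < k := by
    by_contra! hkl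
    obtain ⟨y, hyB, hyi, hyx⟩ := hx B ⟨hB.1.trans hSK, hB.2.1, hkl.trans hB.2.2⟩
    have hyS : y ∈ S.erase a := hSK (hB.1 hyB)
    exact (mem_sdiff.1 (hB.1 hyB)).2 (mem_insert_of_mem (mem_filter.2 ⟨hyS, hyi, hyx⟩))
  exact ⟨l + 1, _, hd.extend hK, univ.image x, hA.1.trans (erase_subset a S), hA.2.1,
    hlk.trans_le hA.2.2⟩

theorem Finset.exists_chainColoring_isLargeAntichain (S : Finset α) :
    ∃ k c, IsChainColoring S k c ∧ ∃ A, IsLargeAntichain S k A := by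
  classical
  induction S using Finset.strongInduction with
  | H S ih =>
  obtain rfl | hne := S.eq_empty_or_nonempty
  · exact ⟨0, 0, ⟨by simp, by simp⟩, ∅, by simp [IsLargeAntichain]⟩
  obtain ⟨a, haS⟩ := S.exists_maximal hne
  obtain ⟨k, c, hc, A', hA'⟩ := ih (S.erase a) (erase_ssubset haS.1)
  obtain ⟨x, hA, hx⟩ := hc.exists_tops hA'
  by_cases h : ∃ i, x i ≤ a
  · obtain ⟨i, hi⟩ := h
    exact dilworth_step_of_le hc haS.1 hA hi (hx i) ih
  · push Not at h
    exact dilworth_step_of_forall_not_le hc haS hA h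

end Dilworth

section Reachability

variable {V : Type*} {E : V → V → Prop} {u v w : V} {p : List V}

theorem isSTWalk_singleton_s11 (v : V) : IsSTWalk E v v [v] :=
  ⟨⟨List.cons_ne_nil v [], List.isChain_singleton v⟩, rfl, rfl⟩

theorem IsSTWalk.reflTransGen_of_mem (hp : IsSTWalk E u w p) (hv : v ∈ p) :
    ReflTransGen E u v ∧ ReflTransGen E v w :=
  ⟨hp.1.2.induction (ReflTransGen E u) p (fun _ _ h h' => h'.tail h)
      (fun hne => (List.head_eq_iff_head?_eq_some hne).2 hp.2.1 ▸ .refl) v hv,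
    hp.1.2.backwards_induction (ReflTransGen E · w) p (fun _ _ h h' => h'.head h)
      (fun hne => (List.getLast_eq_iff_getLast?_eq_some hne).2 hp.2.2 ▸ .refl) v hv⟩

theorem IsSTWalk.isChain (hp : IsSTWalk E u w p) : IsChain (ReflTransGen E) {v | v ∈ p} := by
  have hpw : p.Pairwise (ReflTransGen E) :=
    List.isChain_iff_pairwise.1 (hp.1.2.imp fun _ _ => ReflTransGen.single)
  exact fun a ha b hb _ => List.Pairwise.forall_of_forall_of_flip
    (R := fun a b => ReflTransGen E a b ∨ ReflTransGen E b a) (fun _ _ => Or.inl .refl)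
    (hpw.imp Or.inl) (hpw.imp Or.inr) ha hb

theorem IsSTWalk.exists_of_reflTransGen (h : ReflTransGen E u v) (hp : IsSTWalk E v w p) :
    ∃ q, IsSTWalk E u w q ∧ u ∈ q ∧ p ⊆ q := by
  induction h using ReflTransGen.head_induction_on with
  | refl => exact ⟨p, hp, List.mem_of_mem_head? hp.2.1, List.Subset.refl p⟩
  | @head u y huy _ ih =>
    obtain ⟨q, ⟨⟨-, hqE⟩, hqy, hqw⟩, -, hpq⟩ := ih
    refine ⟨u :: q, ⟨⟨List.cons_ne_nil u q, hqE.cons fun z hz => ?_⟩, rfl, ?_⟩,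
      List.mem_cons_self, List.Subset.trans hpq (List.subset_cons_self u q)⟩
    · rw [hqy, Option.mem_some_iff] at hz
      exact hz ▸ huy
    · rw [List.getLast?_cons, hqw, Option.getD_some]

theorem exists_isSTWalk_forall_mem_of_isChain {C : Finset V}
    (hC : IsChain (ReflTransGen E) (C : Set V)) (hu : ∀ x ∈ C, ReflTransGen E u x)
    (hw : ∀ x ∈ C, ReflTransGen E x w) (huw : ReflTransGen E u w) :
    ∃ q, IsSTWalk E u w q ∧ ∀ x ∈ C, x ∈ q := by
  classical
  induction C using Finset.strongInduction generalizing u with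
  | H C ih =>
  obtain rfl | hne := C.eq_empty_or_nonempty
  · obtain ⟨q, hq, -⟩ := (isSTWalk_singleton_s11 w).exists_of_reflTransGen huw
    exact ⟨q, hq, by simp⟩
  obtain ⟨m, hmC, hm⟩ := hC.exists_forall_rel_of_finset hne
  obtain ⟨p, hp, hpC⟩ := ih (C.erase m) (erase_ssubset hmC) (hC.mono (by simp))
    (fun x hx => hm x (mem_of_mem_erase hx)) (fun x hx => hw x (mem_of_mem_erase hx)) (hw m hmC)
  obtain ⟨q, hq, -, hpq⟩ := hp.exists_of_reflTransGen (hu m hmC)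
  refine ⟨q, hq, fun x hx => hpq ?_⟩
  by_cases hxm : x = m
  · exact hxm ▸ List.mem_of_mem_head? hp.2.1
  · exact hpC x (mem_erase.2 ⟨hxm, hx⟩)

end Reachability

theorem IsAntichain.card_le_of_forall_exists_mem_isChain {α ι : Type*} [Fintype ι]
    {r : α → α → Prop} {A : Finset α} (hA : IsAntichain r (A : Set α)) {C : ι → Set α}
    (hC : ∀ i, IsChain r (C i)) (hcov : ∀ a ∈ A, ∃ i, a ∈ C i) : #A ≤ Fintype.card ι := by
  choose f hf using hcov
  rw [← Fintype.card_coe A]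
  refine Fintype.card_le_of_injective (fun a : A => f a a.2) fun a b hab => Subtype.ext ?_
  by_contra hne
  have hb : (b : α) ∈ C (f a a.2) := by rw [show f a a.2 = f b b.2 from hab]; exact hf b b.2
  rcases hC _ (hf a a.2) hb hne with h | h
  · exact hA a.2 b.2 hne h
  · exact hA b.2 a.2 (Ne.symm hne) h

theorem csSup_eq_csInf_of_forall_le {β : Type*} [ConditionallyCompleteLattice β] {S T : Set β}
    (h : ∀ a ∈ S, ∀ b ∈ T, a ≤ b) {a b : β} (ha : a ∈ S) (hb : b ∈ T) (hba : b ≤ a) :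
    sSup S = sInf T :=
  le_antisymm (csSup_le ⟨a, ha⟩ fun x hx => le_csInf ⟨b, hb⟩ (h x hx))
    ((csInf_le ⟨a, h a ha⟩ hb).trans
      (hba.trans (le_csSup ⟨b, fun x hx => h x hx b hb⟩ ha)))

abbrev reachOrder {V : Type*} {E : V → V → Prop} (hacyc : ∀ v, ¬ TransGen E v v) :
    PartialOrder V where
  le := ReflTransGen E
  le_refl _ := .refl
  le_trans _ _ _ := ReflTransGen.trans
  le_antisymm a _ hab hba := (reflTransGen_iff_eq_or_transGen.1 hab).elim Eq.symm
    fun h => (hacyc a (h.trans_left hba)).elim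

theorem max_antichain_eq_min_path_cover_general {V : Type*} [Fintype V]
    (E : V → V → Prop) (s t : V)
    (hacyc : ∀ v, ¬ Relation.TransGen E v v)
    (hall : ∀ v : V, ∃ p : List V, IsSTWalk E s t p ∧ v ∈ p) :
    sSup {n : ℕ | ∃ I : Finset V, I.card = n ∧
        ∀ u ∈ I, ∀ v ∈ I, u ≠ v → ¬ Relation.ReflTransGen E u v}
      = sInf {n : ℕ | ∃ p : Fin n → List V,
        (∀ i, IsSTWalk E s t (p i)) ∧ (∀ v : V, ∃ i, v ∈ p i)} := by
  let _ : PartialOrder V := reachOrder hacyc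
  have hreach (v : V) : ReflTransGen E s v ∧ ReflTransGen E v t :=
    let ⟨_, hp, hv⟩ := hall v
    hp.reflTransGen_of_mem hv
  obtain ⟨k, c, hc, A, -, hA, hkA⟩ := (univ : Finset V).exists_chainColoring_isLargeAntichain
  have hpath (i : Fin k) :
      ∃ q, IsSTWalk E s t q ∧ ∀ v ∈ ({v ∈ univ | c v = i} : Finset V), v ∈ q :=
    exists_isSTWalk_forall_mem_of_isChain (hc.isChain_filter i) (fun v _ => (hreach v).1)
      (fun v _ => (hreach v).2) (hreach t).1
  choose q hq hqc using hpath
  refine csSup_eq_csInf_of_forall_le ?_ ⟨A, rfl, fun u hu v hv => hA hu hv⟩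
    ⟨q, hq, fun v => ⟨⟨c v, hc.1 v (mem_univ v)⟩, hqc _ v (by simp)⟩⟩ hkA
  rintro _ ⟨I, rfl, hI⟩ n ⟨p, hp, hpv⟩
  simpa using IsAntichain.card_le_of_forall_exists_mem_isChain (r := ReflTransGen E)
    (fun u hu v hv => hI u hu v hv) (fun i => (hp i).isChain) (fun v _ => hpv v)

/-- Dilworth-type duality. In a finite DAG with source `s` and
sink `t` in which every vertex lies on some s-t path, the maximum size of an
incomparable vertex set (pairwise unreachable vertices) equals the minimum
number of s-t paths needed so that every vertex lies on at least one path. -/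
theorem max_antichain_eq_min_path_cover {V : Type*} [Fintype V]
    (E : V → V → Prop) (s t : V)
    (hacyc : ∀ v, ¬ Relation.TransGen E v v)
    (hs : ∀ u, ¬ E u s) (ht : ∀ u, ¬ E t u)
    (hall : ∀ v : V, ∃ p : List V, IsSTWalk E s t p ∧ v ∈ p) :
    sSup {n : ℕ | ∃ I : Finset V, I.card = n ∧
        ∀ u ∈ I, ∀ v ∈ I, u ≠ v → ¬ Relation.ReflTransGen E u v}
      = sInf {n : ℕ | ∃ p : Fin n → List V,
        (∀ i, IsSTWalk E s t (p i)) ∧ (∀ v : V, ∃ i, v ∈ p i)} :=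
  max_antichain_eq_min_path_cover_general E s t hacyc hall
end
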